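/- Fix an integer n ≥ 1. Let P be an (n+1)×(n+1) complex lower unitriangular matrix (P_{i,i} = 1 for all i and P_{i,j} = 0 for j > i) such that every entry of P·T₀·P^{−1} is a rational number. Then there exists a lower unitriangular matrix L with rational entries such that the matrix P′ = L·P satisfies P′_{i,j} = C(i,j)·P′_{i−j,0} for all 0 ≤ j < i ≤ n; that is, after a rational unitriangular change of basis, the period matrix is of Pascal type with entries a_{i,j} = C(i,j)·a_{i−j,0}. -/

import Mathlib

/-!
`M = P T₀ P⁻¹` and `T₀` are unipotent lower triangular with the same subdiagonal `(j + 1)ⱼ`,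
since conjugating by a unitriangular matrix does not change the subdiagonal. So `e₀` is cyclic
for `M - 1` and for `T₀ - 1`: the Krylov matrices with columns `(M - 1)ᵏ e₀` and `(T₀ - 1)ᵏ e₀`
are lower triangular with diagonal `k!`, and `L = K_{T₀} K_M⁻¹` is a rational lower unitriangular
matrix with `L M = T₀ L`. Then `L P` commutes with `T₀`. The Pascal-type matrices
`(C(i, j) aᵢ₋ⱼ)` all commute with one another, and a matrix commuting with `T₀` is determined by
its first column, so `L P` is the Pascal-type matrix built from its own first column.
-/

open Finset

namespace Matrix

section LowerTriangular

variable {m R : Type*} [LinearOrder m] [Fintype m] [CommRing R] {A B : Matrix m m R}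

theorem IsLowerTriangular.mul_apply_self (hA : A.IsLowerTriangular) (hB : B.IsLowerTriangular)
    (i : m) : (A * B) i i = A i i * B i i := by
  rw [mul_apply]
  refine Finset.sum_eq_single i (fun k _ hki => ?_) (by simp)
  rcases hki.lt_or_gt with h | h
  · rw [hB h, mul_zero]
  · rw [hA h, zero_mul]

theorem IsLowerTriangular.mul (hA : A.IsLowerTriangular) (hB : B.IsLowerTriangular) :
    (A * B).IsLowerTriangular :=
  BlockTriangular.mul hA hB

theorem IsLowerTriangular.isUnit_det (hA : A.IsLowerTriangular) (h : ∀ i, IsUnit (A i i)) :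
    IsUnit A.det := by
  rw [det_of_isLowerTriangular A hA]
  exact IsUnit.prod_iff.2 fun i _ => h i

theorem IsLowerTriangular.inv [DecidableEq m] (hA : A.IsLowerTriangular) :
    A⁻¹.IsLowerTriangular := by
  by_cases h : IsUnit A.det
  · have := A.invertibleOfIsUnitDet h
    exact blockTriangular_inv_of_blockTriangular hA
  · rw [nonsing_inv_apply_not_isUnit A h]
    exact blockTriangular_zero

theorem IsLowerTriangular.mul_inv_apply_self [DecidableEq m] (hA : A.IsLowerTriangular)
    (h : IsUnit A.det) (i : m) : A i i * A⁻¹ i i = 1 := by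
  rw [← hA.mul_apply_self hA.inv, mul_nonsing_inv A h, one_apply_eq]

end LowerTriangular

def IsStrictlyLowerTriangular {m R : Type*} [LE m] [Zero R] (N : Matrix m m R) : Prop :=
  ∀ ⦃i j⦄, i ≤ j → N i j = 0

variable {R : Type*} [CommRing R] {n : ℕ}

def HasSubdiagonal (N : Matrix (Fin (n + 1)) (Fin (n + 1)) R) (c : ℕ → R) : Prop :=
  ∀ i : Fin n, N i.succ i.castSucc = c i

theorem IsLowerTriangular.mul_apply_succ_castSucc {A B : Matrix (Fin (n + 1)) (Fin (n + 1)) R}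
    (hA : A.IsLowerTriangular) (hB : B.IsLowerTriangular) (i : Fin n) :
    (A * B) i.succ i.castSucc =
      A i.succ i.castSucc * B i.castSucc i.castSucc + A i.succ i.succ * B i.succ i.castSucc := by
  rw [mul_apply]
  refine Finset.sum_eq_add _ _ Fin.castSucc_lt_succ.ne (fun k _ hk => ?_) (by simp) (by simp)
  rcases lt_or_gt_of_ne hk.1 with h | h
  · rw [hB (i := k) (j := i.castSucc) h, mul_zero]
  · have : i.succ < k := by
      rw [Fin.lt_def] at h ⊢
      have := Fin.val_ne_of_ne hk.2
      simp only [Fin.val_succ, Fin.val_castSucc] at h this ⊢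
      omega
    rw [hA (i := i.succ) (j := k) this, zero_mul]

namespace IsStrictlyLowerTriangular

variable {N : Matrix (Fin (n + 1)) (Fin (n + 1)) R}

theorem isLowerTriangular (hN : N.IsStrictlyLowerTriangular) : N.IsLowerTriangular :=
  fun _ _ h => hN (le_of_lt h)

theorem of_isLowerTriangular (hN : N.IsLowerTriangular) (hd : ∀ i, N i i = 0) :
    N.IsStrictlyLowerTriangular := by
  intro i j hij
  rcases hij.lt_or_eq with h | rfl
  · exact hN (i := i) (j := j) h
  · exact hd i

theorem pow_apply_eq_zero (hN : N.IsStrictlyLowerTriangular) {k : ℕ} {i j : Fin (n + 1)}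
    (h : (i : ℕ) < j + k) : (N ^ k) i j = 0 := by
  induction k generalizing i with
  | zero => exact one_apply_ne (by rintro rfl; omega)
  | succ k ih =>
    rw [pow_succ', mul_apply]
    refine Finset.sum_eq_zero fun m _ => ?_
    rcases le_or_gt i m with him | hmi
    · rw [hN him, zero_mul]
    · rw [ih (by rw [Fin.lt_def] at hmi; omega), mul_zero]

theorem pow_eq_zero_of_le (hN : N.IsStrictlyLowerTriangular) {k : ℕ} (hk : n + 1 ≤ k) :
    N ^ k = 0 := by
  ext i j
  exact hN.pow_apply_eq_zero (by omega)

theorem pow_apply_self_zero (hN : N.IsStrictlyLowerTriangular) {c : ℕ → R}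
    (hc : N.HasSubdiagonal c) (i : Fin (n + 1)) :
    (N ^ (i : ℕ)) i 0 = ∏ m ∈ range i, c m := by
  induction i using Fin.induction with
  | zero => simp
  | succ i ih =>
    rw [Fin.val_succ, pow_succ', mul_apply, prod_range_succ, mul_comm,
      Finset.sum_eq_single i.castSucc, hc i, ← Fin.val_castSucc, ih]
    · intro m _ hm
      rcases lt_or_gt_of_ne hm with h | h
      · rw [hN.pow_apply_eq_zero (by simpa [Fin.lt_def] using h), mul_zero]
      · rw [hN (Fin.castSucc_lt_iff_succ_le.1 h), zero_mul]
    · simp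

theorem of_map {S : Type*} [CommRing S] {f : R →+* S}
    (hf : Function.Injective f) (h : (N.map f).IsStrictlyLowerTriangular) :
    N.IsStrictlyLowerTriangular :=
  fun _ _ hij => hf (by simpa using h hij)

end IsStrictlyLowerTriangular

theorem HasSubdiagonal.of_map {S : Type*} [CommRing S] {f : R →+* S} (hf : Function.Injective f)
    {N : Matrix (Fin (n + 1)) (Fin (n + 1)) R} {c : ℕ → R}
    (h : (N.map f).HasSubdiagonal (f ∘ c)) : N.HasSubdiagonal c :=
  fun i => hf (h i)

def krylov (N : Matrix (Fin (n + 1)) (Fin (n + 1)) R) : Matrix (Fin (n + 1)) (Fin (n + 1)) R :=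
  of fun i k => (N ^ (k : ℕ)) i 0

theorem mul_krylov_apply (A N : Matrix (Fin (n + 1)) (Fin (n + 1)) R) (i k : Fin (n + 1)) :
    (A * krylov N) i k = (A * N ^ (k : ℕ)) i 0 := by
  simp [krylov, mul_apply]

section Krylov

variable {N N' : Matrix (Fin (n + 1)) (Fin (n + 1)) R}

theorem IsStrictlyLowerTriangular.krylov_isLowerTriangular (hN : N.IsStrictlyLowerTriangular) :
    (krylov N).IsLowerTriangular :=
  fun i k h => hN.pow_apply_eq_zero (by simpa using h)

theorem IsStrictlyLowerTriangular.isUnit_det_krylov {K : Type*} [Field K]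
    {N : Matrix (Fin (n + 1)) (Fin (n + 1)) K} (hN : N.IsStrictlyLowerTriangular) {c : ℕ → K}
    (hc : N.HasSubdiagonal c) (hc0 : ∀ m < n, c m ≠ 0) : IsUnit (krylov N).det := by
  refine hN.krylov_isLowerTriangular.isUnit_det fun k => ?_
  rw [krylov, of_apply, hN.pow_apply_self_zero hc, isUnit_iff_ne_zero, prod_ne_zero_iff]
  exact fun m hm => hc0 m (by have := k.isLt; rw [mem_range] at hm; omega)

/-- `C` kills every column `N ^ k e₀` of the Krylov matrix, and these columns span. -/
theorem eq_zero_of_commute_of_apply_zero (hK : IsUnit (krylov N).det) {C : Matrix _ _ R}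
    (hC : Commute C N) (h0 : ∀ i, C i 0 = 0) : C = 0 := by
  have hCK : C * krylov N = 0 * krylov N := by
    ext i k
    rw [mul_krylov_apply, (hC.pow_right _).eq, mul_apply, zero_mul]
    simp [h0]
  exact ((isUnit_iff_isUnit_det _).2 hK).mul_left_inj.1 hCK

theorem mul_eq_mul_of_mul_krylov_eq (hN : N.IsStrictlyLowerTriangular)
    (hN' : N'.IsStrictlyLowerTriangular) (hK : IsUnit (krylov N).det) {L : Matrix _ _ R}
    (hL : L * krylov N = krylov N') : L * N = N' * L := by
  have hpow (k : ℕ) (i : Fin (n + 1)) : (L * N ^ k) i 0 = (N' ^ k) i 0 := by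
    rcases lt_or_ge k (n + 1) with hk | hk
    · have := congr_fun (congr_fun hL i) ⟨k, hk⟩
      rwa [mul_krylov_apply] at this
    · simp [hN.pow_eq_zero_of_le hk, hN'.pow_eq_zero_of_le hk]
  refine ((isUnit_iff_isUnit_det _).2 hK).mul_left_inj.1 (ext fun i k => ?_)
  rw [mul_krylov_apply, mul_krylov_apply, mul_assoc, ← pow_succ', hpow, mul_assoc, mul_apply,
    pow_succ', mul_apply]
  simp_rw [hpow]

end Krylov

theorem exists_lowerUnitriangular_mul_eq_mul {K : Type*} [Field K]
    {N N' : Matrix (Fin (n + 1)) (Fin (n + 1)) K} (hN : N.IsStrictlyLowerTriangular)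
    (hN' : N'.IsStrictlyLowerTriangular) {c : ℕ → K} (hc : N.HasSubdiagonal c)
    (hc' : N'.HasSubdiagonal c) (hc0 : ∀ m < n, c m ≠ 0) :
    ∃ L : Matrix (Fin (n + 1)) (Fin (n + 1)) K,
      L.IsLowerTriangular ∧ (∀ i, L i i = 1) ∧ L * N = N' * L := by
  have hK := hN.isUnit_det_krylov hc hc0
  have hKl := hN.krylov_isLowerTriangular
  refine ⟨krylov N' * (krylov N)⁻¹, hN'.krylov_isLowerTriangular.mul hKl.inv, fun i => ?_,
    mul_eq_mul_of_mul_krylov_eq hN hN' hK (by rw [mul_assoc, nonsing_inv_mul _ hK, mul_one])⟩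
  have hdiag : krylov N' i i = krylov N i i := by
    simp only [krylov, of_apply, hN.pow_apply_self_zero hc, hN'.pow_apply_self_zero hc']
  rw [hN'.krylov_isLowerTriangular.mul_apply_self hKl.inv, hdiag, hKl.mul_inv_apply_self hK]

theorem IsStrictlyLowerTriangular.conj {P N : Matrix (Fin (n + 1)) (Fin (n + 1)) R}
    (hP : P.IsLowerTriangular) (hN : N.IsStrictlyLowerTriangular) :
    (P * N * P⁻¹).IsStrictlyLowerTriangular := by
  refine .of_isLowerTriangular ((hP.mul hN.isLowerTriangular).mul hP.inv) fun i => ?_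
  rw [(hP.mul hN.isLowerTriangular).mul_apply_self hP.inv,
    hP.mul_apply_self hN.isLowerTriangular, hN le_rfl, mul_zero, zero_mul]

theorem HasSubdiagonal.conj {P N : Matrix (Fin (n + 1)) (Fin (n + 1)) R}
    (hP : P.IsLowerTriangular) (hPd : ∀ i, P i i = 1) (hN : N.IsStrictlyLowerTriangular)
    {c : ℕ → R} (hc : N.HasSubdiagonal c) : (P * N * P⁻¹).HasSubdiagonal c := by
  have hPinv : ∀ i, P⁻¹ i i = 1 := fun i => by
    simpa [hPd] using hP.mul_inv_apply_self (hP.isUnit_det fun i => by simp [hPd]) i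
  intro i
  rw [(hP.mul hN.isLowerTriangular).mul_apply_succ_castSucc hP.inv,
    hP.mul_apply_succ_castSucc hN.isLowerTriangular, hP.mul_apply_self hN.isLowerTriangular,
    hN le_rfl, hN le_rfl, hPd, hPinv, hc]
  ring

/-- `pascal 1` is the Pascal matrix `T₀`. -/
def pascal (a : ℕ → R) : Matrix (Fin (n + 1)) (Fin (n + 1)) R :=
  of fun i j => ((i : ℕ).choose j : R) * a (i - j)

theorem pascal_mul_apply (a b : ℕ → R) (i j : Fin (n + 1)) :
    (pascal a * pascal b : Matrix (Fin (n + 1)) (Fin (n + 1)) R) i j =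
      ∑ k ∈ Icc (j : ℕ) i,
        (((i : ℕ).choose k * k.choose j : ℕ) : R) * (a (i - k) * b (k - j)) := by
  simp only [mul_apply, pascal, of_apply]
  rw [Fin.sum_univ_eq_sum_range
    (fun k => ((i : ℕ).choose k : R) * a (i - k) * (k.choose j * b (k - j))) (n + 1)]
  refine (sum_subset (fun k hk => ?_) fun k _ hk => ?_).symm.trans
    (sum_congr rfl fun _ _ => by push_cast; ring)
  · have := i.isLt
    simp only [mem_Icc, mem_range] at hk ⊢
    omega
  · rcases lt_or_ge k j with h | h
    · simp [Nat.choose_eq_zero_of_lt h]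
    · simp [Nat.choose_eq_zero_of_lt (not_le.1 fun h' => hk (mem_Icc.2 ⟨h, h'⟩))]

theorem _root_.Nat.choose_mul_choose_reflect {i j k : ℕ} (hjk : j ≤ k) (hki : k ≤ i) :
    i.choose (i + j - k) * (i + j - k).choose j = i.choose k * k.choose j := by
  rw [Nat.choose_mul (k := i + j - k) (s := j) (by omega), Nat.choose_mul hjk]
  exact congrArg _ (Nat.choose_symm_of_eq_add (by omega))

theorem pascal_mul_comm (a b : ℕ → R) : pascal (n := n) a * pascal b = pascal b * pascal a := by
  ext i j
  rw [pascal_mul_apply, pascal_mul_apply]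
  refine sum_nbij' (fun k => i + j - k) (fun k => i + j - k) ?_ ?_ ?_ ?_ fun k hk => ?_
  iterate 4 (intro k hk; simp only [mem_Icc] at hk ⊢; omega)
  rw [mem_Icc] at hk
  rw [← Nat.choose_mul_choose_reflect hk.1 hk.2, show (i : ℕ) - (i + j - k) = k - j by omega,
    show (i : ℕ) + j - k - j = i - k by omega, mul_comm (a _)]

theorem isStrictlyLowerTriangular_pascal_one_sub_one :
    (pascal 1 - 1 : Matrix (Fin (n + 1)) (Fin (n + 1)) R).IsStrictlyLowerTriangular := by
  intro i j hij
  rcases hij.lt_or_eq with h | rfl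
  · simp [pascal, Nat.choose_eq_zero_of_lt (Fin.lt_def.1 h), one_apply_ne h.ne]
  · simp [pascal]

theorem hasSubdiagonal_pascal_one_sub_one :
    (pascal 1 - 1 : Matrix (Fin (n + 1)) (Fin (n + 1)) R).HasSubdiagonal (fun m => m + 1) := by
  intro i
  simp [pascal, one_apply_ne Fin.castSucc_lt_succ.ne']

theorem apply_eq_choose_mul_of_commute_pascal {K : Type*} [Field K] [CharZero K]
    {A : Matrix (Fin (n + 1)) (Fin (n + 1)) K} (hA : Commute A (pascal 1)) (i j : Fin (n + 1)) :
    A i j = ((i : ℕ).choose j : K) * A ⟨i - j, (Nat.sub_le _ _).trans_lt i.isLt⟩ 0 := by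
  set a : ℕ → K := fun m => if h : m < n + 1 then A ⟨m, h⟩ 0 else 0
  have hK : IsUnit (krylov (pascal 1 - 1 : Matrix (Fin (n + 1)) (Fin (n + 1)) K)).det :=
    isStrictlyLowerTriangular_pascal_one_sub_one.isUnit_det_krylov
      hasSubdiagonal_pascal_one_sub_one fun m _ => Nat.cast_add_one_ne_zero m
  have hcomm : Commute (A - pascal a) (pascal 1 - 1) :=
    (hA.sub_left (pascal_mul_comm a 1)).sub_right (Commute.one_right _)
  have hzero := eq_zero_of_commute_of_apply_zero hK hcomm fun i => by
    simp [pascal, a, i.is_le]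
  have := congr_fun (congr_fun (sub_eq_zero.1 hzero) i) j
  simpa [pascal, a, show (i : ℕ) ≤ n + j by omega] using this

theorem exists_lowerUnitriangular_mul_eq_pascal_mul_of_map_eq {K F : Type*} [Field K] [CharZero K]
    [Field F] (f : K →+* F) {P : Matrix (Fin (n + 1)) (Fin (n + 1)) F}
    (hP : P.IsLowerTriangular) (hPd : ∀ i, P i i = 1) {M : Matrix (Fin (n + 1)) (Fin (n + 1)) K}
    (hM : M.map f = P * pascal 1 * P⁻¹) :
    ∃ L : Matrix (Fin (n + 1)) (Fin (n + 1)) K,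
      L.IsLowerTriangular ∧ (∀ i, L i i = 1) ∧ L * M = pascal 1 * L := by
  have hMN : (M - 1).map f = P * (pascal 1 - 1) * P⁻¹ := by
    rw [Matrix.map_sub _ (map_sub f), Matrix.map_one _ (map_zero f) (map_one f), hM, mul_sub,
      sub_mul, mul_one, mul_nonsing_inv P (hP.isUnit_det fun i => by simp [hPd])]
  have hN₀ := isStrictlyLowerTriangular_pascal_one_sub_one (R := F) (n := n)
  have hMs : (M - 1).IsStrictlyLowerTriangular := .of_map f.injective (hMN ▸ hN₀.conj hP)
  have hMc : (M - 1).HasSubdiagonal (fun m => m + 1) := .of_map f.injective <| by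
    rw [hMN]
    convert hasSubdiagonal_pascal_one_sub_one.conj hP hPd hN₀ using 1
    ext m
    simp
  obtain ⟨L, hL, hLd, hLM⟩ := exists_lowerUnitriangular_mul_eq_mul hMs
    isStrictlyLowerTriangular_pascal_one_sub_one hMc hasSubdiagonal_pascal_one_sub_one
    fun m _ => Nat.cast_add_one_ne_zero m
  refine ⟨L, hL, hLd, ?_⟩
  rwa [mul_sub, sub_mul, mul_one, one_mul, sub_left_inj] at hLM

end Matrix

open Matrix

theorem period_matrix_pascal_normalization_general (n : ℕ)
    (P : Matrix (Fin (n + 1)) (Fin (n + 1)) ℂ)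
    (hdiag : ∀ i, P i i = 1)
    (hupper : ∀ i j : Fin (n + 1), (i : ℕ) < (j : ℕ) → P i j = 0)
    (T₀ : Matrix (Fin (n + 1)) (Fin (n + 1)) ℂ)
    (hT : ∀ i j : Fin (n + 1), T₀ i j = ((i : ℕ).choose (j : ℕ) : ℂ))
    (hrat : ∀ i j : Fin (n + 1), ∃ q : ℚ, (P * T₀ * P⁻¹) i j = (q : ℂ)) :
    ∃ L : Matrix (Fin (n + 1)) (Fin (n + 1)) ℂ,
      (∀ i j : Fin (n + 1), ∃ q : ℚ, L i j = (q : ℂ)) ∧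
      (∀ i, L i i = 1) ∧
      (∀ i j : Fin (n + 1), (i : ℕ) < (j : ℕ) → L i j = 0) ∧
      ∀ i j : Fin (n + 1), (j : ℕ) < (i : ℕ) →
        (L * P) i j = ((i : ℕ).choose (j : ℕ) : ℂ) *
          (L * P) ⟨(i : ℕ) - (j : ℕ), lt_of_le_of_lt (Nat.sub_le _ _) i.isLt⟩
            ⟨0, Nat.succ_pos n⟩ := by
  have hP : P.IsLowerTriangular := fun i j h => hupper i j h
  have hPu : IsUnit P.det := hP.isUnit_det fun i => by simp [hdiag]
  have hT₀ : T₀ = pascal 1 := by ext i j; simp [hT, pascal]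
  set f := Rat.castHom ℂ
  obtain ⟨M, hM⟩ :
      ∃ M : Matrix (Fin (n + 1)) (Fin (n + 1)) ℚ, M.map f = P * T₀ * P⁻¹ := by
    choose q hq using hrat
    exact ⟨of q, by ext i j; simp [hq, f]⟩
  obtain ⟨L, hL, hLd, hLM⟩ :=
    exists_lowerUnitriangular_mul_eq_pascal_mul_of_map_eq f hP hdiag (hT₀ ▸ hM)
  have hconj : L.map f * (P * T₀ * P⁻¹) = T₀ * L.map f := by
    rw [← hM, ← Matrix.map_mul, hLM, Matrix.map_mul, hT₀]
    congr 1
    ext i j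
    simp [pascal, f]
  have hcomm : Commute (L.map f * P) (pascal 1) := by
    rw [← hT₀]
    calc L.map f * P * T₀ = L.map f * (P * T₀ * P⁻¹) * P := by
          simp only [mul_assoc, nonsing_inv_mul P hPu, mul_one]
      _ = T₀ * (L.map f * P) := by rw [hconj, mul_assoc]
  refine ⟨L.map f, fun i j => ⟨L i j, rfl⟩, fun i => by simp [f, hLd], fun i j h => ?_,
    fun i j _ => apply_eq_choose_mul_of_commute_pascal hcomm i j⟩
  simp [f, hL (i := i) (j := j) h]

/-- if `P` is lower unitriangular and `P·T₀·P⁻¹` has rational entries, then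
after multiplying by a rational lower unitriangular matrix `L`, the matrix `P′ = L·P`
satisfies `P′_{i,j} = C(i,j)·P′_{i−j,0}` for all `j < i`: the period matrix becomes of
Pascal type `a_{i,j} = C(i,j)·a_{i−j,0}`. -/
theorem period_matrix_pascal_normalization (n : ℕ) (hn : 1 ≤ n)
    (P : Matrix (Fin (n + 1)) (Fin (n + 1)) ℂ)
    (hdiag : ∀ i, P i i = 1)
    (hupper : ∀ i j : Fin (n + 1), (i : ℕ) < (j : ℕ) → P i j = 0)
    (T₀ : Matrix (Fin (n + 1)) (Fin (n + 1)) ℂ)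
    (hT : ∀ i j : Fin (n + 1), T₀ i j = ((i : ℕ).choose (j : ℕ) : ℂ))
    (hrat : ∀ i j : Fin (n + 1), ∃ q : ℚ, (P * T₀ * P⁻¹) i j = (q : ℂ)) :
    ∃ L : Matrix (Fin (n + 1)) (Fin (n + 1)) ℂ,
      (∀ i j : Fin (n + 1), ∃ q : ℚ, L i j = (q : ℂ)) ∧
      (∀ i, L i i = 1) ∧
      (∀ i j : Fin (n + 1), (i : ℕ) < (j : ℕ) → L i j = 0) ∧
      ∀ i j : Fin (n + 1), (j : ℕ) < (i : ℕ) →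
        (L * P) i j = ((i : ℕ).choose (j : ℕ) : ℂ) *
          (L * P) ⟨(i : ℕ) - (j : ℕ), lt_of_le_of_lt (Nat.sub_le _ _) i.isLt⟩
            ⟨0, Nat.succ_pos n⟩ :=
  period_matrix_pascal_normalization_general n P hdiag hupper T₀ hT hrat
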